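/- Let (X,d) be a connected Robinson space with |X| ≥ 2 and d(x,y) > 0 for all distinct x,y ∈ X. Then M_max is a partition of X with |M_max| ≥ 3, and every maximal mmodule of (X,d) is a block. -/

import Mathlib

/-! If a nonempty set `M` has all its crossing distances `d(x, y)` (`x ∈ M`, `y ∉ M`) equal to one
value `δ > 0`, then no edge of `G_δ` leaves `M`, so connectedness forces `M = X`.

If two proper mmodules `M, M'` covered `X`, then for `p ∉ M` and `q ∉ M'` every crossing distance
of `M` would equal `d(q, p)`. Hence the union of two overlapping maximal mmodules is again a proper
mmodule, which makes `M_max` a partition, and no one or two maximal mmodules cover `X`.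

For a maximal mmodule `M` and a compatible order with `a < b < c`, `a, c ∈ M`, `b ∉ M`, the
compatibility inequalities show that `M ∪ (a, c)` is an mmodule, hence equal to `X` by maximality,
and that every crossing distance of `M` equals `d(b, a)`. -/

structure Dissim (X : Type*) where
  d : X → X → ℝ
  symm : ∀ x y, d x y = d y x
  nonneg : ∀ x y, 0 ≤ d x y
  self : ∀ x, d x x = 0

variable {X : Type*}

def Compatible (D : Dissim X) (lt : X → X → Prop) : Prop :=
  ∀ x y z : X, lt x y → lt y z → D.d x y ≤ D.d x z ∧ D.d y z ≤ D.d x z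

def IsCompatOrder (D : Dissim X) (lt : X → X → Prop) : Prop :=
  IsStrictTotalOrder X lt ∧ Compatible D lt

def Robinson (D : Dissim X) : Prop :=
  ∃ lt : X → X → Prop, IsCompatOrder D lt

def IsMmodule (D : Dissim X) (M : Set X) : Prop :=
  ∀ z ∉ M, ∀ x ∈ M, ∀ y ∈ M, D.d z x = D.d z y

def IsInterval (lt : X → X → Prop) (I : Set X) : Prop :=
  ∀ a b c : X, lt a b → lt b c → a ∈ I → c ∈ I → b ∈ I

def IsBlock (D : Dissim X) (Y : Set X) : Prop :=
  ∀ lt : X → X → Prop, IsCompatOrder D lt → IsInterval lt Y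

noncomputable def diam (D : Dissim X) (Y : Set X) : ℝ :=
  sSup (Set.image2 D.d Y Y)

def Gdelta (D : Dissim X) (δ : ℝ) : SimpleGraph X where
  Adj x y := x ≠ y ∧ D.d x y ≠ δ
  symm := by
    constructor
    rintro x y ⟨hxy, hd⟩
    exact ⟨hxy.symm, by rw [D.symm]; exact hd⟩
  loopless := by constructor; rintro x ⟨h, -⟩; exact h rfl

def Gle (D : Dissim X) (δ : ℝ) : SimpleGraph X where
  Adj x y := x ≠ y ∧ D.d x y ≤ δ
  symm := by
    constructor
    rintro x y ⟨hxy, hd⟩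
    exact ⟨hxy.symm, by rw [D.symm]; exact hd⟩
  loopless := by constructor; rintro x ⟨h, -⟩; exact h rfl

def Glt (D : Dissim X) (δ : ℝ) : SimpleGraph X where
  Adj x y := x ≠ y ∧ D.d x y < δ
  symm := by
    constructor
    rintro x y ⟨hxy, hd⟩
    exact ⟨hxy.symm, by rw [D.symm]; exact hd⟩
  loopless := by constructor; rintro x ⟨h, -⟩; exact h rfl

def IsCompOf {V : Type*} (G : SimpleGraph V) (C : Set V) : Prop :=
  ∃ x : V, C = {y | G.Reachable x y}

def MMax (D : Dissim X) : Set (Set X) :=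
  {M | IsMmodule D M ∧ M ≠ Set.univ ∧
    ∀ M' : Set X, IsMmodule D M' → M' ≠ Set.univ → M ⊆ M' → M = M'}

def IsPartition {α : Type*} (P : Set (Set α)) : Prop :=
  (∀ A ∈ P, A.Nonempty) ∧
  (∀ A ∈ P, ∀ B ∈ P, A ≠ B → Disjoint A B) ∧
  ⋃₀ P = Set.univ

def IsCopartition {α : Type*} (P : Set (Set α)) : Prop :=
  IsPartition ((fun M => Mᶜ) '' P)

def SimpleGraph.restrictTo {V : Type*} (G : SimpleGraph V) (S : Set V) : SimpleGraph V where
  Adj x y := x ∈ S ∧ y ∈ S ∧ G.Adj x y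
  symm := by constructor; rintro x y ⟨hx, hy, h⟩; exact ⟨hy, hx, h.symm⟩
  loopless := by constructor; rintro x ⟨-, -, h⟩; exact h.ne rfl

def ConnectedWithin {V : Type*} (G : SimpleGraph V) (S : Set V) : Prop :=
  S.Nonempty ∧ ∀ x ∈ S, ∀ y ∈ S, (G.restrictTo S).Reachable x y

def IsCompWithin {V : Type*} (G : SimpleGraph V) (S : Set V) (C : Set V) : Prop :=
  ∃ x ∈ S, C = {y | (G.restrictTo S).Reachable x y}

def IsStrictTotalOrderOn {α : Type*} (S : Set α) (lt : α → α → Prop) : Prop :=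
  (∀ x ∈ S, ¬ lt x x) ∧
  (∀ x ∈ S, ∀ y ∈ S, ∀ z ∈ S, lt x y → lt y z → lt x z) ∧
  (∀ x ∈ S, ∀ y ∈ S, x ≠ y → (lt x y ∨ lt y x) ∧ ¬ (lt x y ∧ lt y x))

def CompatibleOn (D : Dissim X) (S : Set X) (lt : X → X → Prop) : Prop :=
  ∀ x ∈ S, ∀ y ∈ S, ∀ z ∈ S, lt x y → lt y z → D.d x y ≤ D.d x z ∧ D.d y z ≤ D.d x z

def IsCompatOrderOn (D : Dissim X) (S : Set X) (lt : X → X → Prop) : Prop :=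
  IsStrictTotalOrderOn S lt ∧ CompatibleOn D S lt

def FlatOn (D : Dissim X) (S : Set X) : Prop :=
  ∃ lt : X → X → Prop, IsCompatOrderOn D S lt ∧ (∃ x ∈ S, ∃ y ∈ S, lt x y) ∧
    ∀ lt' : X → X → Prop, IsCompatOrderOn D S lt' →
      (∀ x ∈ S, ∀ y ∈ S, (lt' x y ↔ lt x y)) ∨ (∀ x ∈ S, ∀ y ∈ S, (lt' x y ↔ lt y x))

def Flat (D : Dissim X) : Prop :=
  ∃ lt : X → X → Prop, IsCompatOrder D lt ∧ (∃ x y : X, lt x y) ∧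
    ∀ lt' : X → X → Prop, IsCompatOrder D lt' →
      (∀ x y : X, lt' x y ↔ lt x y) ∨ (∀ x y : X, lt' x y ↔ lt y x)

def IsCopointAt (D : Dissim X) (p : X) (C : Set X) : Prop :=
  IsMmodule D C ∧ C.Nonempty ∧ p ∉ C ∧
  ∀ C' : Set X, IsMmodule D C' → p ∉ C' → C ⊆ C' → C = C'

def bigGraph (D : Dissim X) (δ : ℝ) (I : Set (Set X)) : SimpleGraph (Set X) where
  Adj C C' := C ∈ I ∧ C' ∈ I ∧ C ≠ C' ∧ ∃ x ∈ C, ∃ y ∈ C', δ < D.d x y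
  symm := by
    constructor
    rintro C C' ⟨hC, hC', hne, x, hx, y, hy, hd⟩
    exact ⟨hC', hC, hne.symm, y, hy, x, hx, by rw [D.symm]; exact hd⟩
  loopless := by constructor; rintro C ⟨-, -, hne, -⟩; exact hne rfl

variable {D : Dissim X}

lemma Set.three_le_ncard_of_sUnion_eq_univ {α : Type*} [Nonempty α] {P : Set (Set α)}
    (hfin : P.Finite) (hcover : ⋃₀ P = Set.univ)
    (hpair : ∀ A ∈ P, ∀ B ∈ P, A ∪ B ≠ Set.univ) : 3 ≤ P.ncard := by
  by_contra! hlt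
  interval_cases h : P.ncard
  · rw [Set.ncard_eq_zero hfin] at h
    exact Set.empty_ne_univ (by simpa [h] using hcover)
  · obtain ⟨A, rfl⟩ := Set.ncard_eq_one.mp h
    exact hpair A rfl A rfl (by simpa using hcover)
  · obtain ⟨A, B, -, rfl⟩ := Set.ncard_eq_two.mp h
    exact hpair A (by simp) B (by simp) (by simpa using hcover)

lemma Compatible.flip {lt : X → X → Prop} (h : Compatible D lt) : Compatible D (flip lt) := by
  intro x y z hxy hyz
  obtain ⟨h₁, h₂⟩ := h z y x hyz hxy
  rw [D.symm x y, D.symm x z, D.symm y z]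
  exact ⟨h₂, h₁⟩

lemma eq_univ_of_forall_dist_eq {δ : ℝ} (hconn : (Gdelta D δ).Connected) {M : Set X}
    (hcross : ∀ x ∈ M, ∀ y ∉ M, D.d x y = δ) {a : X} (ha : a ∈ M) : M = Set.univ := by
  refine Set.eq_univ_of_forall fun b => ?_
  by_contra hb
  obtain ⟨w⟩ := hconn.preconnected a b
  obtain ⟨e, -, he₁, he₂⟩ := w.exists_boundary_dart M ha hb
  exact e.adj.2 (hcross _ he₁ _ he₂)

lemma IsMmodule.union {M M' : Set X} (hM : IsMmodule D M) (hM' : IsMmodule D M')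
    {w : X} (hw : w ∈ M) (hw' : w ∈ M') : IsMmodule D (M ∪ M') := by
  intro z hz x hx y hy
  rw [Set.mem_union, not_or] at hz
  have key : ∀ u ∈ M ∪ M', D.d z u = D.d z w := by
    rintro u (hu | hu)
    · exact hM z hz.1 u hu w hw
    · exact hM' z hz.2 u hu w hw'
  rw [key x hx, key y hy]

lemma isMmodule_of_subsingleton {M : Set X} (hM : M.Subsingleton) : IsMmodule D M :=
  fun _ _ _ hx _ hy => by rw [hM hx hy]

variable (D) in
lemma exists_mem_mmax [Finite X] [Nontrivial X] (x : X) : ∃ M ∈ MMax D, x ∈ M := by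
  let F : Set (Set X) := {M | IsMmodule D M ∧ M ≠ Set.univ ∧ x ∈ M}
  have hF : F.Nonempty :=
    ⟨{x}, isMmodule_of_subsingleton Set.subsingleton_singleton, Set.singleton_ne_univ x, rfl⟩
  obtain ⟨M, ⟨hmod, hne, hx⟩, hmax⟩ := F.toFinite.exists_maximalFor id F hF
  exact ⟨M, ⟨hmod, hne, fun M' hM' hne' hsub => hsub.antisymm (hmax ⟨hM', hne', hsub hx⟩ hsub)⟩, hx⟩

lemma nonempty_of_mem_mmax [Nontrivial X] {M : Set X} (hM : M ∈ MMax D) : M.Nonempty := by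
  rw [Set.nonempty_iff_ne_empty]
  rintro rfl
  have x : X := Classical.arbitrary X
  exact Set.singleton_ne_empty x (hM.2.2 {x} (isMmodule_of_subsingleton Set.subsingleton_singleton)
    (Set.singleton_ne_univ x) (Set.empty_subset _)).symm

section Order

variable {lt : X → X → Prop} {M : Set X} {a c : X}

lemma IsMmodule.dist_eq_of_lt_of_lt (hcomp : Compatible D lt) (hM : IsMmodule D M) (ha : a ∈ M)
    (hc : c ∈ M) {z x : X} (hz : z ∉ M) (hza : lt z a) (hzx : lt z x) (hax : lt a x)
    (hxc : lt x c) : D.d z x = D.d z a :=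
  le_antisymm ((hcomp z x c hzx hxc).1.trans_eq (hM z hz c hc a ha)) (hcomp z a x hza hax).1

lemma IsMmodule.union_Ioo (hlt : IsCompatOrder D lt) (hM : IsMmodule D M) (ha : a ∈ M)
    (hc : c ∈ M) : IsMmodule D (M ∪ {u | lt a u ∧ lt u c}) := by
  have := hlt.1
  intro z hz x hx y hy
  simp only [Set.mem_union, Set.mem_ofPred_eq, not_or] at hz
  have hza : z ≠ a := fun h => hz.1 (h ▸ ha)
  have hzc : z ≠ c := fun h => hz.1 (h ▸ hc)
  have hside : lt z a ∨ lt c z := by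
    rcases trichotomous_of lt z a with h | h | h
    · exact .inl h
    · exact absurd h hza
    · rcases trichotomous_of lt z c with h' | h' | h'
      · exact absurd ⟨h, h'⟩ hz.2
      · exact absurd h' hzc
      · exact .inr h'
  have key : ∀ x ∈ M ∪ {u | lt a u ∧ lt u c}, D.d z x = D.d z a := by
    rintro x (hx | ⟨hax, hxc⟩)
    · exact hM z hz.1 x hx a ha
    rcases hside with h | h
    · exact hM.dist_eq_of_lt_of_lt hlt.2 ha hc hz.1 h (trans_of lt h hax) hax hxc
    · calc D.d z x = D.d z c :=
            hM.dist_eq_of_lt_of_lt hlt.2.flip hc ha hz.1 h (trans_of lt hxc h) hxc hax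
        _ = D.d z a := hM z hz.1 c hc a ha
  rw [key x hx, key y hy]

lemma IsMmodule.dist_eq_of_lt_of_notMem (hcomp : Compatible D lt) (hM : IsMmodule D M)
    (ha : a ∈ M) (hc : c ∈ M) {u b : X} (hu : u ∉ M) (hb : b ∉ M) (hau : lt a u)
    (hub : lt u b) (hbc : lt b c) : D.d u a = D.d b a := by
  have h₁ := (hcomp a u b hau hub).1
  have h₂ := (hcomp u b c hub hbc).2
  rw [hM b hb c hc a ha, hM u hu c hc a ha] at h₂
  rw [D.symm a u, D.symm a b] at h₁
  exact le_antisymm h₁ h₂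

end Order

section Connected

variable (hpos : ∀ x y : X, x ≠ y → 0 < D.d x y)
  (hconn : ∀ δ : ℝ, 0 < δ → (Gdelta D δ).Connected)
include hpos hconn

lemma IsMmodule.union_ne_univ {M M' : Set X} (hM : IsMmodule D M) (hM' : IsMmodule D M')
    (hMu : M ≠ Set.univ) (hM'u : M' ≠ Set.univ) : M ∪ M' ≠ Set.univ := by
  intro hU
  obtain ⟨p, hp⟩ := (Set.ne_univ_iff_exists_notMem M).mp hMu
  obtain ⟨q, hq⟩ := (Set.ne_univ_iff_exists_notMem M').mp hM'u
  have mem_M' : ∀ y ∉ M, y ∈ M' := fun y hy => (hU.symm ▸ Set.mem_univ y).resolve_left hy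
  have hqM : q ∈ M := by_contra fun h => hq (mem_M' q h)
  refine hMu (eq_univ_of_forall_dist_eq (hconn _ (hpos q p fun h => hp (h ▸ hqM)))
    (fun x hx y hy => ?_) hqM)
  calc D.d x y = D.d y q := by rw [D.symm, hM y hy x hx q hqM]
    _ = D.d q p := by rw [D.symm, hM' q hq y (mem_M' y hy) p (mem_M' p hp)]

lemma union_ne_univ_of_mem_mmax {A B : Set X} (hA : A ∈ MMax D) (hB : B ∈ MMax D) :
    A ∪ B ≠ Set.univ :=
  hA.1.union_ne_univ hpos hconn hB.1 hA.2.1 hB.2.1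

lemma disjoint_of_mem_mmax {A B : Set X} (hA : A ∈ MMax D) (hB : B ∈ MMax D) (hAB : A ≠ B) :
    Disjoint A B := by
  refine Set.disjoint_left.mpr fun w hwA hwB => hAB ?_
  have hmod := hA.1.union hB.1 hwA hwB
  have hne := union_ne_univ_of_mem_mmax hpos hconn hA hB
  exact (hA.2.2 _ hmod hne Set.subset_union_left).trans
    (hB.2.2 _ hmod hne Set.subset_union_right).symm

lemma isPartition_mmax [Finite X] [Nontrivial X] : IsPartition (MMax D) :=
  ⟨fun _ hM => nonempty_of_mem_mmax hM,
    fun _ hA _ hB hAB => disjoint_of_mem_mmax hpos hconn hA hB hAB,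
    Set.eq_univ_of_forall fun x => by
      obtain ⟨M, hM, hx⟩ := exists_mem_mmax D x
      exact ⟨M, hM, hx⟩⟩

lemma three_le_ncard_mmax [Finite X] [Nontrivial X] : 3 ≤ (MMax D).ncard :=
  Set.three_le_ncard_of_sUnion_eq_univ (Set.toFinite _) (isPartition_mmax hpos hconn).2.2
    fun _ hA _ hB => union_ne_univ_of_mem_mmax hpos hconn hA hB

lemma isBlock_of_mem_mmax {M : Set X} (hM : M ∈ MMax D) : IsBlock D M := by
  intro lt hlt a b c hab hbc ha hc
  by_contra hb
  have := hlt.1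
  have hcover : M ∪ {u | lt a u ∧ lt u c} = Set.univ := by
    by_contra hne
    have heq := hM.2.2 _ (hM.1.union_Ioo hlt ha hc) hne Set.subset_union_left
    exact hb (heq ▸ Or.inr ⟨hab, hbc⟩)
  have hcross : ∀ x ∈ M, ∀ y ∉ M, D.d x y = D.d b a := by
    intro x hx y hy
    have hy' : y ∈ M ∪ {u | lt a u ∧ lt u c} := hcover ▸ Set.mem_univ y
    obtain ⟨hay, hyc⟩ := hy'.resolve_left hy
    rw [D.symm, hM.1 y hy x hx a ha]
    rcases trichotomous_of lt y b with h | rfl | h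
    · exact hM.1.dist_eq_of_lt_of_notMem hlt.2 ha hc hy hb hay h hbc
    · rfl
    · exact (hM.1.dist_eq_of_lt_of_notMem hlt.2 ha hc hb hy hab h hyc).symm
  exact hM.2.1 (eq_univ_of_forall_dist_eq (hconn _ (hpos b a fun h => hb (h ▸ ha))) hcross ha)

end Connected

theorem stmt10_general [Fintype X] (D : Dissim X)
    (hcard : 2 ≤ Fintype.card X)
    (hpos : ∀ x y : X, x ≠ y → 0 < D.d x y)
    (hconn : ∀ δ : ℝ, 0 < δ → (Gdelta D δ).Connected) :
    IsPartition (MMax D) ∧ 3 ≤ (MMax D).ncard ∧ ∀ M ∈ MMax D, IsBlock D M := by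
  have : Nontrivial X := Fintype.one_lt_card_iff_nontrivial.mp hcard
  exact ⟨isPartition_mmax hpos hconn, three_le_ncard_mmax hpos hconn,
    fun _ => isBlock_of_mem_mmax hpos hconn⟩

/-- in a connected Robinson space, M_max is a partition of X with at
least 3 parts and every maximal mmodule is a block. -/
theorem stmt10 [Fintype X] [Nonempty X] (D : Dissim X)
    (hcard : 2 ≤ Fintype.card X)
    (hpos : ∀ x y : X, x ≠ y → 0 < D.d x y)
    (hRob : Robinson D)
    (hconn : ∀ δ : ℝ, 0 < δ → (Gdelta D δ).Connected) :
    IsPartition (MMax D) ∧ 3 ≤ (MMax D).ncard ∧ ∀ M ∈ MMax D, IsBlock D M :=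
  stmt10_general D hcard hpos hconn
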